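/- arXiv:2004.14286 — 4 statements merged into one kernel-verified Lean document; each statement's English description precedes it below -/
import Mathlib

section
/- Let L be a complete lattice, Q a partially ordered set equipped with a superlinear family of translations T, f : L → Q a monotone map that respects joins, and C a cocomplete category. For every ε ≥ 0 and every functor M : L → C, there is an isomorphism f^*T_ε^*f_*M ≅ M ∘ T♭_ε (where T♭_ε = f♭ ∘ T_ε ∘ f), natural in M. That is, the ε-shift of M relative to f coincides, naturally in M, with precomposition by the lower approximation translation T♭_ε. -/
open CategoryTheory Limits NNReal ENNReal

universe v u

/-- A superlinear family of translations on a poset `Q`. -/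
structure SuperlinearFamily (Q : Type v) [PartialOrder Q] where
  trans : ℝ≥0 → Q →o Q
  le_self : ∀ (ε : ℝ≥0) (q : Q), q ≤ trans ε q
  superlinear : ∀ (ε₁ ε₂ : ℝ≥0) (q : Q), trans ε₂ (trans ε₁ q) ≤ trans (ε₁ + ε₂) q

namespace SuperlinearFamily

variable {Q : Type v} [PartialOrder Q] (T : SuperlinearFamily Q)

lemma trans_mono_eps {ε ε' : ℝ≥0} (h : ε ≤ ε') (q : Q) : T.trans ε q ≤ T.trans ε' q :=
  calc T.trans ε q ≤ T.trans (ε' - ε) (T.trans ε q) := T.le_self _ _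
    _ ≤ T.trans (ε + (ε' - ε)) q := T.superlinear _ _ _
    _ = T.trans ε' q := by rw [add_tsub_cancel_of_le h]

variable {C : Type u} [Category.{v} C]

/-- The `ε`-shift `(M)^ε = M ∘ T_ε` of a `Q`-module. -/
def shift (ε : ℝ≥0) (M : Q ⥤ C) : Q ⥤ C := (T.trans ε).monotone.functor ⋙ M

/-- η^ε : M ⟶ (M)^ε. -/
def eta (ε : ℝ≥0) (M : Q ⥤ C) : M ⟶ T.shift ε M where
  app q := M.map (homOfLE (T.le_self ε q))
  naturality a b u := by
    dsimp [shift, Monotone.functor]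
    rw [← M.map_comp, ← M.map_comp]
    exact congrArg M.map (Subsingleton.elim _ _)

/-- η^{ε,ε'} : (M)^ε ⟶ (M)^{ε'} for ε ≤ ε'. -/
def etaLE {ε ε' : ℝ≥0} (h : ε ≤ ε') (M : Q ⥤ C) : T.shift ε M ⟶ T.shift ε' M where
  app q := M.map (homOfLE (T.trans_mono_eps h q))
  naturality a b u := by
    dsimp [shift, Monotone.functor]
    rw [← M.map_comp, ← M.map_comp]
    exact congrArg M.map (Subsingleton.elim _ _)

/-- Σ^{ε,ε} : ((M)^ε)^ε ⟶ (M)^{2ε}. -/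
def sigma (ε : ℝ≥0) (M : Q ⥤ C) : T.shift ε (T.shift ε M) ⟶ T.shift (2 * ε) M where
  app q := M.map (homOfLE (show T.trans ε (T.trans ε q) ≤ T.trans (2 * ε) q by
    rw [two_mul]; exact T.superlinear ε ε q))
  naturality a b u := by
    dsimp [shift, Monotone.functor]
    rw [← M.map_comp, ← M.map_comp]
    exact congrArg M.map (Subsingleton.elim _ _)

/-- The shift of a natural transformation: (ψ)^ε := T_ε^* ψ. -/
def shiftHom (ε : ℝ≥0) {M N : Q ⥤ C} (ψ : M ⟶ N) : T.shift ε M ⟶ T.shift ε N :=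
  Functor.whiskerLeft (T.trans ε).monotone.functor ψ

/-- A weak ε-interleaving of `Q`-modules `M` and `N`. -/
def WeakInterleaving (ε : ℝ≥0) (M N : Q ⥤ C) : Prop :=
  ∃ (φ : M ⟶ T.shift ε N) (ψ : N ⟶ T.shift ε M),
    φ ≫ T.shiftHom ε ψ ≫ T.sigma ε M = T.eta 0 M ≫ T.etaLE zero_le M ∧
    ψ ≫ T.shiftHom ε φ ≫ T.sigma ε N = T.eta 0 N ≫ T.etaLE zero_le N

/-- The weak interleaving distance between two `Q`-modules, valued in `[0,∞]`. -/
noncomputable def weakDist (M N : Q ⥤ C) : ℝ≥0∞ :=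
  ⨅ ε : {ε : ℝ≥0 // T.WeakInterleaving ε M N}, (ε : ℝ≥0∞)

end SuperlinearFamily

/-- The map `f♭ : Q → L`, `f♭(q) = sSup {x | f x ≤ q}`, as a monotone map. -/
def flatHom {L : Type v} [CompleteLattice L] {Q : Type v} [PartialOrder Q] (f : L →o Q) :
    Q →o L :=
  ⟨fun q => sSup {x : L | f x ≤ q}, fun _ _ h => sSup_le_sSup fun _ hx => le_trans hx h⟩

/-- The map `f♯ : Q → L`, `f♯(q) = sInf {x | q ≤ f x}`, as a monotone map. -/
def sharpHom {L : Type v} [CompleteLattice L] {Q : Type v} [PartialOrder Q] (f : L →o Q) :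
    Q →o L :=
  ⟨fun q => sInf {x : L | q ≤ f x}, fun _ _ h => sInf_le_sInf fun _ hx => le_trans h hx⟩

/-- The shift identification: if `f : L → Q` respects joins and `Q` carries a superlinear
family of translations `T`, then the ε-shift relative to `f`, `f^* T_ε^* f_*`, is naturally
isomorphic (in `M`) to precomposition with the lower approximation translation
`T♭_ε = f♭ ∘ T_ε ∘ f`. -/
theorem relative_shift_iso_lower_approximation {L : Type v} [CompleteLattice L]
    {Q : Type v} [PartialOrder Q] (T : SuperlinearFamily Q) (f : L →o Q)
    (hjoins : ∀ (S : Set L) (q : Q), (∀ x ∈ S, f x ≤ q) → f (sSup S) ≤ q)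
    (C : Type u) [Category.{v} C] [HasColimits C] (ε : ℝ≥0) :
    Nonempty
      ((f.monotone.functor.lan ⋙
          (Functor.whiskeringLeft Q Q C).obj (T.trans ε).monotone.functor ⋙
          (Functor.whiskeringLeft L Q C).obj f.monotone.functor : (L ⥤ C) ⥤ (L ⥤ C)) ≅
        (Functor.whiskeringLeft L L C).obj
          ((flatHom f).comp ((T.trans ε).comp f)).monotone.functor) := by
  -- Galois connection f ⊣ f♭
  have gc : GaloisConnection f (flatHom f) := by
    intro x q
    constructor
    · intro h; exact le_sSup h
    · intro h
      exact le_trans (f.monotone h) (hjoins _ q (fun y hy => hy))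
  let adj1 : f.monotone.functor ⊣ (flatHom f).monotone.functor := gc.adjunction
  let adj2 := Adjunction.whiskerLeft C adj1
  have hcolim : ∀ (M : L ⥤ C), f.monotone.functor.HasPointwiseLeftKanExtension M :=
    fun M => inferInstance
  let iso0 : f.monotone.functor.lan ≅
      (Functor.whiskeringLeft Q L C).obj (flatHom f).monotone.functor :=
    (f.monotone.functor.lanAdjunction C).leftAdjointUniq adj2
  exact ⟨Functor.isoWhiskerRight iso0 ((Functor.whiskeringLeft Q Q C).obj (T.trans ε).monotone.functor ⋙
    (Functor.whiskeringLeft L Q C).obj f.monotone.functor)⟩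
end

section
/- Let Q be a partially ordered set equipped with a superlinear family of translations T, and let C be a category. For Q-modules M, N : Q → C, let d_weak(M,N) ∈ [0,∞] be the infimum of all ε admitting a weak ε-interleaving, and let d_standard(M,N) ∈ [0,∞] be the infimum of all ε admitting a standard ε-interleaving, i.e. a pair φ : M ⟶ (N)^ε, ψ : N ⟶ (M)^ε with (ψ)^ε ∘ φ = η^ε_{(M)^ε} ∘ η^ε_M : M ⟶ ((M)^ε)^ε and (φ)^ε ∘ ψ = η^ε_{(N)^ε} ∘ η^ε_N : N ⟶ ((N)^ε)^ε. Then d_weak(M,N) ≤ d_standard(M,N) ≤ 2·d_weak(M,N). -/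
open CategoryTheory Limits NNReal ENNReal

universe v u

namespace SuperlinearFamily

variable {Q : Type v} [PartialOrder Q] {C : Type u} [Category.{v} C]
variable (T : SuperlinearFamily Q)

/-- A standard ε-interleaving of `Q`-modules: φ : M ⟶ (N)^ε and ψ : N ⟶ (M)^ε with
`(ψ)^ε ∘ φ = η^ε_{(M)^ε} ∘ η^ε_M` and `(φ)^ε ∘ ψ = η^ε_{(N)^ε} ∘ η^ε_N`. -/
def StdInterleaving (ε : ℝ≥0) (M N : Q ⥤ C) : Prop :=
  ∃ (φ : M ⟶ T.shift ε N) (ψ : N ⟶ T.shift ε M),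
    φ ≫ T.shiftHom ε ψ = T.eta ε M ≫ T.eta ε (T.shift ε M) ∧
    ψ ≫ T.shiftHom ε φ = T.eta ε N ≫ T.eta ε (T.shift ε N)

/-- The standard interleaving distance between two `Q`-modules, valued in `[0,∞]`. -/
noncomputable def stdDist (M N : Q ⥤ C) : ℝ≥0∞ :=
  ⨅ ε : {ε : ℝ≥0 // T.StdInterleaving ε M N}, (ε : ℝ≥0∞)

end SuperlinearFamily

/-
The internal maps η, η^{ε,ε'}, Σ all have components `M.map (homOfLE _)`, and since `Q` is
thin any two composites of such maps with the same source and target agree. So a standard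
ε-interleaving is weak (postcompose with Σ), and a weak ε-interleaving `(φ, ψ)` pushed
forward along η^{ε,2ε} is a standard 2ε-interleaving: naturality of `ψ` moves η^{ε,2ε} past
`(ψ)^{2ε}`, after which the weak equation applies.
-/

namespace SuperlinearFamily

variable {Q : Type v} [PartialOrder Q] {C : Type u} [Category.{v} C]
variable (T : SuperlinearFamily Q) (M : Q ⥤ C)

lemma eta_comp_eta_comp_sigma (ε : ℝ≥0) :
    T.eta ε M ≫ T.eta ε (T.shift ε M) ≫ T.sigma ε M = T.eta 0 M ≫ T.etaLE zero_le M := by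
  ext q
  simp only [NatTrans.comp_app, eta, etaLE, sigma, shift, Monotone.functor, Functor.comp_map,
    ← M.map_comp]
  exact congrArg M.map (Subsingleton.elim _ _)

lemma etaLE_comp_shiftHom_etaLE {ε : ℝ≥0} (h : ε ≤ 2 * ε) :
    T.etaLE h (T.shift ε M) ≫ T.shiftHom (2 * ε) (T.etaLE h M) =
      T.sigma ε M ≫ T.eta (2 * ε) (T.shift (2 * ε) M) := by
  ext q
  simp only [NatTrans.comp_app, eta, etaLE, sigma, shift, shiftHom, Monotone.functor,
    Functor.comp_map, Functor.whiskerLeft_app, ← M.map_comp]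
  exact congrArg M.map (Subsingleton.elim _ _)

lemma eta_comp_etaLE_comp_eta (ε : ℝ≥0) :
    T.eta 0 M ≫ T.etaLE zero_le M ≫ T.eta (2 * ε) (T.shift (2 * ε) M) =
      T.eta (2 * ε) M ≫ T.eta (2 * ε) (T.shift (2 * ε) M) := by
  ext q
  simp only [NatTrans.comp_app, eta, etaLE, shift, Monotone.functor, Functor.comp_map,
    ← M.map_comp]
  exact congrArg M.map (Subsingleton.elim _ _)

variable {M}

lemma etaLE_comp_shiftHom {N : Q ⥤ C} {ε ε' : ℝ≥0} (h : ε ≤ ε') (ψ : M ⟶ N) :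
    T.etaLE h M ≫ T.shiftHom ε' ψ = T.shiftHom ε ψ ≫ T.etaLE h N := by
  ext q
  exact ψ.naturality (homOfLE (T.trans_mono_eps h q))

lemma shiftHom_comp {N P : Q ⥤ C} (ε : ℝ≥0) (α : M ⟶ N) (β : N ⟶ P) :
    T.shiftHom ε (α ≫ β) = T.shiftHom ε α ≫ T.shiftHom ε β :=
  Functor.whiskerLeft_comp _ _ _

variable {T} {N : Q ⥤ C}

lemma StdInterleaving.weakInterleaving {ε : ℝ≥0} (h : T.StdInterleaving ε M N) :
    T.WeakInterleaving ε M N := by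
  obtain ⟨φ, ψ, hM, hN⟩ := h
  refine ⟨φ, ψ, ?_, ?_⟩
  · rw [← Category.assoc, hM, Category.assoc, eta_comp_eta_comp_sigma]
  · rw [← Category.assoc, hN, Category.assoc, eta_comp_eta_comp_sigma]

lemma std_eq_of_weak_eq {ε : ℝ≥0} (hle : ε ≤ 2 * ε) (φ : M ⟶ T.shift ε N)
    (ψ : N ⟶ T.shift ε M)
    (h : φ ≫ T.shiftHom ε ψ ≫ T.sigma ε M = T.eta 0 M ≫ T.etaLE zero_le M) :
    (φ ≫ T.etaLE hle N) ≫ T.shiftHom (2 * ε) (ψ ≫ T.etaLE hle M) =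
      T.eta (2 * ε) M ≫ T.eta (2 * ε) (T.shift (2 * ε) M) := by
  calc (φ ≫ T.etaLE hle N) ≫ T.shiftHom (2 * ε) (ψ ≫ T.etaLE hle M)
      = φ ≫ T.shiftHom ε ψ ≫ T.etaLE hle (T.shift ε M) ≫
          T.shiftHom (2 * ε) (T.etaLE hle M) := by
        rw [shiftHom_comp, Category.assoc, ← Category.assoc (T.etaLE hle N),
          etaLE_comp_shiftHom, Category.assoc]
    _ = (φ ≫ T.shiftHom ε ψ ≫ T.sigma ε M) ≫ T.eta (2 * ε) (T.shift (2 * ε) M) := by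
        rw [etaLE_comp_shiftHom_etaLE]; simp only [Category.assoc]
    _ = T.eta (2 * ε) M ≫ T.eta (2 * ε) (T.shift (2 * ε) M) := by
        rw [h, Category.assoc, eta_comp_etaLE_comp_eta]

lemma WeakInterleaving.stdInterleaving_two_mul {ε : ℝ≥0} (h : T.WeakInterleaving ε M N) :
    T.StdInterleaving (2 * ε) M N := by
  obtain ⟨φ, ψ, hM, hN⟩ := h
  have hle : ε ≤ 2 * ε := by rw [two_mul]; exact le_add_self
  exact ⟨φ ≫ T.etaLE hle N, ψ ≫ T.etaLE hle M,
    std_eq_of_weak_eq hle φ ψ hM, std_eq_of_weak_eq hle ψ φ hN⟩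

end SuperlinearFamily

/-- `d_weak(M,N) ≤ d_standard(M,N) ≤ 2·d_weak(M,N)` for modules over a poset equipped
with a superlinear family of translations. -/
theorem weakDist_le_stdDist_le_two_mul_weakDist {Q : Type v} [PartialOrder Q]
    {C : Type u} [Category.{v} C] (T : SuperlinearFamily Q) (M N : Q ⥤ C) :
    T.weakDist M N ≤ T.stdDist M N ∧ T.stdDist M N ≤ 2 * T.weakDist M N := by
  constructor
  · exact le_iInf fun ⟨ε, hε⟩ => iInf_le_of_le ⟨ε, hε.weakInterleaving⟩ le_rfl
  · rw [SuperlinearFamily.weakDist, ENNReal.mul_iInf_of_ne two_ne_zero ofNat_ne_top]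
    exact le_iInf fun ⟨ε, hε⟩ =>
      iInf_le_of_le ⟨2 * ε, hε.stdInterleaving_two_mul⟩ (by push_cast; rfl)
end

section
/- Let f : P → Q be a map of posets, T a superlinear family of translations on Q, and C a cocomplete category. If two P-modules M, N : P → C are weakly ε-interleaved relative to f, then the pushforwards f_*M and f_*N are weakly ε-interleaved over Q. (Left Kan extensions preserve weak interleavings.) -/
open CategoryTheory Limits NNReal ENNReal

universe v u

namespace SuperlinearFamily

variable {P : Type v} [PartialOrder P] {Q : Type v} [PartialOrder Q]
variable (T : SuperlinearFamily Q)
variable {C : Type u} [Category.{v} C] [HasColimits C]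

/-- The ε-shift of a `P`-module relative to `f : P → Q`, i.e. `f^* T_ε^* f_* M`. -/
noncomputable def relShift (f : P →o Q) (ε : ℝ≥0) (M : P ⥤ C) : P ⥤ C :=
  f.monotone.functor ⋙ T.shift ε (f.monotone.functor.lan.obj M)

/-- η_P^0 : M ⟶ (M)_P^0, built from the unit of `f_* ⊣ f^*` and η^0 over `Q`. -/
noncomputable def relEtaZero (f : P →o Q) (M : P ⥤ C) : M ⟶ T.relShift f 0 M :=
  f.monotone.functor.lanUnit.app M ≫
    Functor.whiskerLeft f.monotone.functor (T.eta 0 (f.monotone.functor.lan.obj M))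

/-- η_P^{0,2ε} : (M)_P^0 ⟶ (M)_P^{2ε}. -/
noncomputable def relEtaLE (f : P →o Q) (ε : ℝ≥0) (M : P ⥤ C) :
    T.relShift f 0 M ⟶ T.relShift f (2 * ε) M :=
  Functor.whiskerLeft f.monotone.functor (T.etaLE zero_le (f.monotone.functor.lan.obj M))

/-- Σ_P^{ε,ε} : ((M)_P^ε)_P^ε ⟶ (M)_P^{2ε}, the composite of `f^* T_ε^* χ T_ε^* f_*`
with `f^* Σ^{ε,ε} f_*`. -/
noncomputable def relSigma (f : P →o Q) (ε : ℝ≥0) (M : P ⥤ C) :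
    T.relShift f ε (T.relShift f ε M) ⟶ T.relShift f (2 * ε) M :=
  Functor.whiskerLeft f.monotone.functor
      (Functor.whiskerLeft (T.trans ε).monotone.functor
        ((f.monotone.functor.lanAdjunction C).counit.app
          (T.shift ε (f.monotone.functor.lan.obj M)))) ≫
    Functor.whiskerLeft f.monotone.functor (T.sigma ε (f.monotone.functor.lan.obj M))

/-- The relative shift of a natural transformation, `(ψ)_P^ε := f^* T_ε^* f_* ψ`. -/
noncomputable def relShiftHom (f : P →o Q) (ε : ℝ≥0) {N M : P ⥤ C} (ψ : N ⟶ M) :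
    T.relShift f ε N ⟶ T.relShift f ε M :=
  Functor.whiskerLeft f.monotone.functor
    (Functor.whiskerLeft (T.trans ε).monotone.functor (f.monotone.functor.lan.map ψ))

/-- A weak ε-interleaving of `P`-modules `M` and `N` relative to `f : P → Q`. -/
def RelWeakInterleaving (f : P →o Q) (ε : ℝ≥0) (M N : P ⥤ C) : Prop :=
  ∃ (φ : M ⟶ T.relShift f ε N) (ψ : N ⟶ T.relShift f ε M),
    φ ≫ T.relShiftHom f ε ψ ≫ T.relSigma f ε M = T.relEtaZero f M ≫ T.relEtaLE f ε M ∧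
    ψ ≫ T.relShiftHom f ε φ ≫ T.relSigma f ε N = T.relEtaZero f N ≫ T.relEtaLE f ε N

/-- The weak relative interleaving distance between two `P`-modules, valued in `[0,∞]`. -/
noncomputable def relWeakDist (f : P →o Q) (M N : P ⥤ C) : ℝ≥0∞ :=
  ⨅ ε : {ε : ℝ≥0 // T.RelWeakInterleaving f ε M N}, (ε : ℝ≥0∞)

end SuperlinearFamily

/-!
Transposing along the adjunction `f_* ⊣ f^*` sends `φ : M ⟶ f^* T_ε^* f_* N` to
`f_* φ ≫ χ : f_* M ⟶ T_ε^* f_* N`. The relative maps `(ψ)_P^ε ≫ Σ_P^{ε,ε}` and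
`η_P^0 ≫ η_P^{0,2ε}` are `f^*` of the corresponding maps over `Q`, precomposed with a
transpose and with the unit respectively, so each relative interleaving identity is the
transpose of the interleaving identity over `Q` for the transposed pair.
-/

lemma CategoryTheory.Adjunction.map_comp_counit_comp_eq_of_comp_map_eq {C D : Type*}
    [Category C] [Category D] {F : C ⥤ D} {G : D ⥤ C} (adj : F ⊣ G) {X : C} {Y Z : D}
    {φ : X ⟶ G.obj Y} {g : Y ⟶ Z} {k : F.obj X ⟶ Z} (h : φ ≫ G.map g = adj.unit.app X ≫ G.map k) :
    (F.map φ ≫ adj.counit.app Y) ≫ g = k := by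
  calc (F.map φ ≫ adj.counit.app Y) ≫ g = F.map (φ ≫ G.map g) ≫ adj.counit.app Z := by simp
    _ = k := (adj.eq_unit_comp_map_iff k _).1 h

namespace SuperlinearFamily

variable {P Q : Type v} [PartialOrder P] [PartialOrder Q] (T : SuperlinearFamily Q) (f : P →o Q)
variable {C : Type u} [Category.{v} C] [HasColimits C]

lemma relShiftHom_comp_relSigma (ε : ℝ≥0) {M N : P ⥤ C} (ψ : N ⟶ T.relShift f ε M) :
    T.relShiftHom f ε ψ ≫ T.relSigma f ε M =
      Functor.whiskerLeft f.monotone.functor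
        (T.shiftHom ε (f.monotone.functor.lan.map ψ ≫
            (f.monotone.functor.lanAdjunction C).counit.app _) ≫
          T.sigma ε (f.monotone.functor.lan.obj M)) := by
  ext
  exact (Category.assoc _ _ _).symm

lemma relEtaZero_comp_relEtaLE (ε : ℝ≥0) (M : P ⥤ C) :
    T.relEtaZero f M ≫ T.relEtaLE f ε M =
      (f.monotone.functor.lanAdjunction C).unit.app M ≫
        Functor.whiskerLeft f.monotone.functor
          (T.eta 0 (f.monotone.functor.lan.obj M) ≫
            T.etaLE zero_le (f.monotone.functor.lan.obj M)) := by
  rw [Functor.lanAdjunction_unit]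
  ext
  exact Category.assoc _ _ _

end SuperlinearFamily

/-- Left Kan extensions preserve weak interleavings: if two `P`-modules are weakly
ε-interleaved relative to `f : P → Q`, then their pushforwards `f_*M`, `f_*N` are weakly
ε-interleaved over `Q`. -/
theorem lan_preserves_weak_interleavings {P Q : Type v} [PartialOrder P] [PartialOrder Q]
    {C : Type u} [Category.{v} C] [HasColimits C]
    (T : SuperlinearFamily Q) (f : P →o Q) (ε : ℝ≥0) (M N : P ⥤ C)
    (h : T.RelWeakInterleaving f ε M N) :
    T.WeakInterleaving ε (f.monotone.functor.lan.obj M) (f.monotone.functor.lan.obj N) := by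
  obtain ⟨φ, ψ, hM, hN⟩ := h
  set adj := f.monotone.functor.lanAdjunction C
  rw [T.relShiftHom_comp_relSigma, T.relEtaZero_comp_relEtaLE] at hM hN
  exact ⟨f.monotone.functor.lan.map φ ≫ adj.counit.app _,
    f.monotone.functor.lan.map ψ ≫ adj.counit.app _,
    adj.map_comp_counit_comp_eq_of_comp_map_eq hM, adj.map_comp_counit_comp_eq_of_comp_map_eq hN⟩
end

section
/- Let f : P → Q be a map of posets, T a superlinear family of translations on Q, and C a cocomplete category. If for two P-modules M, N : P → C the pushforwards f_*M and f_*N are weakly ε-interleaved over Q, then M and N are weakly ε-interleaved relative to f. (For any map of posets, weak interleavings restrict.) -/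
open CategoryTheory Limits NNReal ENNReal

universe v u

/-- Weak interleavings restrict: if the pushforwards `f_*M`, `f_*N` of two `P`-modules are
weakly ε-interleaved over `Q`, then `M` and `N` are weakly ε-interleaved relative to `f`. -/
theorem weak_interleavings_restrict {P Q : Type v} [PartialOrder P] [PartialOrder Q]
    {C : Type u} [Category.{v} C] [HasColimits C]
    (T : SuperlinearFamily Q) (f : P →o Q) (ε : ℝ≥0) (M N : P ⥤ C)
    (h : T.WeakInterleaving ε (f.monotone.functor.lan.obj M) (f.monotone.functor.lan.obj N)) :
    T.RelWeakInterleaving f ε M N := by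
  obtain ⟨φ, ψ, h1, h2⟩ := h
  have key : ∀ {X Y : P ⥤ C}
      (α : f.monotone.functor.lan.obj X ⟶ T.shift ε (f.monotone.functor.lan.obj Y)),
      f.monotone.functor.lan.map
          (f.monotone.functor.lanUnit.app X ≫ Functor.whiskerLeft f.monotone.functor α) ≫
        (f.monotone.functor.lanAdjunction C).counit.app
          (T.shift ε (f.monotone.functor.lan.obj Y)) = α := by
    intro X Y α
    rw [Functor.map_comp, Category.assoc,
      show Functor.whiskerLeft f.monotone.functor α =
        ((Functor.whiskeringLeft P Q C).obj f.monotone.functor).map α from rfl,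
      ]
    erw [Adjunction.counit_naturality, ← Category.assoc, ← Functor.lanAdjunction_unit,
      Adjunction.left_triangle_components]
    exact Category.id_comp α
  refine ⟨f.monotone.functor.lanUnit.app M ≫ Functor.whiskerLeft f.monotone.functor φ,
    f.monotone.functor.lanUnit.app N ≫ Functor.whiskerLeft f.monotone.functor ψ, ?_, ?_⟩
  · have e : Functor.whiskerLeft (T.trans ε).monotone.functor
        (f.monotone.functor.lan.map
          (f.monotone.functor.lanUnit.app N ≫ Functor.whiskerLeft f.monotone.functor ψ)) ≫
        Functor.whiskerLeft (T.trans ε).monotone.functor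
          ((f.monotone.functor.lanAdjunction C).counit.app
            (T.shift ε (f.monotone.functor.lan.obj M))) ≫
        T.sigma ε (f.monotone.functor.lan.obj M) =
        T.shiftHom ε ψ ≫ T.sigma ε (f.monotone.functor.lan.obj M) := by
      erw [← Category.assoc, ← Functor.whiskerLeft_comp, key]
      rfl
    simp only [SuperlinearFamily.relShiftHom, SuperlinearFamily.relSigma,
      SuperlinearFamily.relEtaZero, SuperlinearFamily.relEtaLE, Category.assoc,
      ← Functor.whiskerLeft_comp]
    erw [Category.assoc, ← Functor.whiskerLeft_comp (F := f.monotone.functor), ← Functor.whiskerLeft_comp (F := f.monotone.functor),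
      ← Functor.whiskerLeft_comp (F := f.monotone.functor), e, h1, Functor.whiskerLeft_comp, Category.assoc]
    rfl
  · have e : Functor.whiskerLeft (T.trans ε).monotone.functor
        (f.monotone.functor.lan.map
          (f.monotone.functor.lanUnit.app M ≫ Functor.whiskerLeft f.monotone.functor φ)) ≫
        Functor.whiskerLeft (T.trans ε).monotone.functor
          ((f.monotone.functor.lanAdjunction C).counit.app
            (T.shift ε (f.monotone.functor.lan.obj N))) ≫
        T.sigma ε (f.monotone.functor.lan.obj N) =
        T.shiftHom ε φ ≫ T.sigma ε (f.monotone.functor.lan.obj N) := by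
      erw [← Category.assoc, ← Functor.whiskerLeft_comp, key]
      rfl
    simp only [SuperlinearFamily.relShiftHom, SuperlinearFamily.relSigma,
      SuperlinearFamily.relEtaZero, SuperlinearFamily.relEtaLE, Category.assoc,
      ← Functor.whiskerLeft_comp]
    erw [Category.assoc, ← Functor.whiskerLeft_comp (F := f.monotone.functor), ← Functor.whiskerLeft_comp (F := f.monotone.functor),
      ← Functor.whiskerLeft_comp (F := f.monotone.functor), e, h2, Functor.whiskerLeft_comp, Category.assoc]
    rfl
end
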